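/- Let n ≥ 1, let q > 0 with q ≠ 1, and let Φ : Matrix (Fin n) ℂ →ₗ[ℂ] Matrix (Fin n) ℂ be a positive trace-preserving linear map. Then Φ is unital (Φ 1 = 1) if and only if Φ does not decrease the Rényi entropy of parameter q, i.e. R_q(Φ ρ) ≥ R_q(ρ) for every density matrix ρ, where R_q(ρ) = (Real.log (∑_k λ_k(ρ)^q))/(1 − q) and λ_k(ρ) are the eigenvalues of ρ. -/

import Mathlib

open scoped Matrix ComplexOrder

/-- A density matrix: positive semidefinite with unit trace. -/
def IsDensityMatrix {n : ℕ} (ρ : Matrix (Fin n) (Fin n) ℂ) : Prop :=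
  ρ.PosSemidef ∧ ρ.trace = 1

/-- The (real) eigenvalues of a matrix, via its Hermitian spectral decomposition
(junk value `0` if the matrix is not Hermitian). -/
noncomputable def eigs {n : ℕ} (A : Matrix (Fin n) (Fin n) ℂ) : Fin n → ℝ :=
  if h : A.IsHermitian then h.eigenvalues else 0

/-- A linear map on matrices is positive if it preserves positive semidefiniteness. -/
def IsPositiveMap {n : ℕ}
    (Φ : Matrix (Fin n) (Fin n) ℂ →ₗ[ℂ] Matrix (Fin n) (Fin n) ℂ) : Prop :=
  ∀ A : Matrix (Fin n) (Fin n) ℂ, A.PosSemidef → (Φ A).PosSemidef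

/-- A linear map on matrices is trace-preserving if it preserves the trace. -/
def IsTracePreserving {n : ℕ}
    (Φ : Matrix (Fin n) (Fin n) ℂ →ₗ[ℂ] Matrix (Fin n) (Fin n) ℂ) : Prop :=
  ∀ A : Matrix (Fin n) (Fin n) ℂ, (Φ A).trace = A.trace


/-- The Rényi entropy of parameter `q`: `R_q(ρ) = log (∑ λ_k^q) / (1 - q)`. -/
noncomputable def renyiEntropy {n : ℕ} (q : ℝ) (A : Matrix (Fin n) (Fin n) ℂ) : ℝ :=
  Real.log (∑ k, eigs A k ^ q) / (1 - q)

/-!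
If `Φ` is unital, write it in an eigenbasis of `ρ` on the input side and of `Φ ρ` on the output
side: the map so obtained is still positive, trace-preserving and unital, and the real parts of
the diagonal entries of the images of the diagonal matrix units form a doubly stochastic matrix
that carries the spectrum of `ρ` onto that of `Φ ρ`. For `0 < q ≠ 1` the function
`x ↦ (q - 1) x ^ q` is strictly convex, and `R_q(ρ) ≤ R_q(σ)` is equivalent to
`∑ (q - 1) λ_k(σ)^q ≤ ∑ (q - 1) λ_k(ρ)^q`, so Jensen's inequality along the rows of the doubly
stochastic matrix gives `R_q(ρ) ≤ R_q(Φ ρ)`.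

Conversely, by the equality case of Jensen's inequality the maximally mixed state `1 / n` is the
only density matrix whose Rényi entropy is at least its own. Hence `Φ (1 / n) = 1 / n`, that is
`Φ 1 = 1`.
-/

open Matrix Unitary

lemma StrictConvexOn.const_mul {E : Type*} [AddCommMonoid E] [Module ℝ E] {s : Set E}
    {f : E → ℝ} (hf : StrictConvexOn ℝ s f) {c : ℝ} (hc : 0 < c) :
    StrictConvexOn ℝ s fun x ↦ c * f x :=
  ⟨hf.1, fun x hx y hy hxy a b ha hb hab ↦
    calc c * f (a • x + b • y) < c * (a • f x + b • f y) :=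
          mul_lt_mul_of_pos_left (hf.2 hx hy hxy ha hb hab) hc
      _ = a • (c * f x) + b • (c * f y) := by simp only [smul_eq_mul]; ring⟩

lemma strictConvexOn_mul_rpow {q : ℝ} (hq0 : 0 < q) (hq1 : q ≠ 1) :
    StrictConvexOn ℝ (Set.Ici 0) fun x : ℝ ↦ (q - 1) * x ^ q := by
  rcases hq1.lt_or_gt with hq1 | hq1
  · refine ((Real.strictConcaveOn_rpow hq0 hq1).neg.const_mul (sub_pos.2 hq1)).congr
      fun x _ ↦ ?_
    simp only [Pi.neg_apply]
    ring
  · exact (strictConvexOn_rpow hq1).const_mul (sub_pos.2 hq1)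

lemma log_div_one_sub_le_iff {q S T : ℝ} (hq : q ≠ 1) (hS : 0 < S) (hT : 0 < T) :
    Real.log S / (1 - q) ≤ Real.log T / (1 - q) ↔ (q - 1) * T ≤ (q - 1) * S := by
  rcases hq.lt_or_gt with hq | hq
  · rw [div_le_div_iff_of_pos_right (by linarith), Real.log_le_log_iff hS hT,
      mul_le_mul_left_of_neg (by linarith)]
  · rw [div_le_div_right_of_neg (by linarith), Real.log_le_log_iff hT hS,
      mul_le_mul_iff_right₀ (by linarith)]

section Jensen

variable {ι : Type*} [Fintype ι]

lemma StrictConvexOn.eq_const_inv_card_of_sum_le {s : Set ℝ} {f : ℝ → ℝ}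
    (hf : StrictConvexOn ℝ s f) {p : ι → ℝ} (hp : ∀ i, p i ∈ s) (hsum : ∑ i, p i = 1)
    (h : ∑ i, f (p i) ≤ ∑ _i : ι, f (Fintype.card ι)⁻¹) :
    p = Function.const ι (Fintype.card ι : ℝ)⁻¹ := by
  have : Nonempty ι := by
    by_contra hι
    simp [not_nonempty_iff.1 hι] at hsum
  set N : ℝ := (Fintype.card ι : ℝ)
  have hN : 0 < N := Nat.cast_pos.2 Fintype.card_pos
  have hmean : ∑ i, N⁻¹ • p i = N⁻¹ := by rw [← Finset.smul_sum, hsum, smul_eq_mul, mul_one]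
  have hconst := hf.eq_of_le_map_sum (fun _ _ ↦ inv_pos.2 hN)
    (by simp [N, hN.ne']) (fun i _ ↦ hp i) (p := p) (t := Finset.univ) <| by
      rw [hmean, ← Finset.smul_sum, smul_eq_mul, inv_mul_le_iff₀ hN]
      simpa [N] using h
  funext j
  have : N * p j = 1 := by
    rw [← hsum, Finset.sum_congr rfl fun i _ ↦ hconst (Finset.mem_univ i) (Finset.mem_univ j),
      Finset.sum_const, Finset.card_univ, nsmul_eq_mul]
  exact eq_inv_of_mul_eq_one_right this

lemma ConvexOn.sum_map_mulVec_le [DecidableEq ι] {s : Set ℝ} {f : ℝ → ℝ}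
    (hf : ConvexOn ℝ s f) {M : Matrix ι ι ℝ} (hM : M ∈ doublyStochastic ℝ ι) {x : ι → ℝ}
    (hx : ∀ i, x i ∈ s) :
    ∑ i, f ((M *ᵥ x) i) ≤ ∑ i, f (x i) :=
  calc ∑ i, f ((M *ᵥ x) i) ≤ ∑ i, ∑ j, M i j * f (x j) := by
        gcongr with i
        exact hf.map_sum_le (fun j _ ↦ nonneg_of_mem_doublyStochastic hM)
          (sum_row_of_mem_doublyStochastic hM i) fun j _ ↦ hx j
    _ = ∑ j, f (x j) := by
        rw [Finset.sum_comm]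
        simp_rw [← Finset.sum_mul, sum_col_of_mem_doublyStochastic hM, one_mul]

end Jensen

section Spectral

variable {ι : Type*} [Fintype ι] [DecidableEq ι]

lemma Matrix.IsHermitian.eigenvalues_eq_const_iff {𝕜 : Type*} [RCLike 𝕜] {A : Matrix ι ι 𝕜}
    (hA : A.IsHermitian) (c : ℝ) : hA.eigenvalues = Function.const ι c ↔ A = (c : 𝕜) • 1 := by
  rw [← (EquivLike.injective (conjStarAlgAut 𝕜 _ (star hA.eigenvectorUnitary))).eq_iff,
    hA.conjStarAlgAut_star_eigenvectorUnitary, map_smul, map_one, smul_one_eq_diagonal,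
    diagonal_eq_diagonal_iff, funext_iff]
  simp

lemma Matrix.PosSemidef.conjStarAlgAut {A : Matrix ι ι ℂ} (hA : A.PosSemidef)
    (u : unitary (Matrix ι ι ℂ)) : (conjStarAlgAut ℂ _ u A).PosSemidef := by
  simpa [star_eq_conjTranspose] using hA.mul_mul_conjTranspose_same (u : Matrix ι ι ℂ)

lemma exists_mem_doublyStochastic_re_diag_map_diagonal
    (Ψ : Matrix ι ι ℂ →ₗ[ℂ] Matrix ι ι ℂ) (hpos : ∀ A, A.PosSemidef → (Ψ A).PosSemidef)
    (htp : ∀ A, (Ψ A).trace = A.trace) (hunital : Ψ 1 = 1) :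
    ∃ M ∈ doublyStochastic ℝ ι, ∀ d : ι → ℝ,
      (fun j ↦ (Ψ (diagonal (RCLike.ofReal ∘ d)) j j).re) = M *ᵥ d := by
  refine ⟨of fun j k ↦ (Ψ (single k k 1) j j).re,
    mem_doublyStochastic_iff_sum.2 ⟨?_, ?_, ?_⟩, ?_⟩
  · intro j k
    have hE : (single k k (1 : ℂ)).PosSemidef := by
      rw [← diagonal_single]; exact .diagonal (Pi.single_nonneg.2 zero_le_one)
    exact Complex.nonneg_iff.1 ((hpos _ hE).diag_nonneg) |>.1
  · intro j
    simp only [of_apply, ← Complex.re_sum, ← Matrix.sum_apply, ← map_sum]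
    rw [sum_single_eq_diagonal (fun _ ↦ (1 : ℂ)), diagonal_one, hunital, one_apply_eq,
      Complex.one_re]
  · intro k
    simp only [of_apply, ← Complex.re_sum]
    rw [show ∑ j, Ψ (single k k 1) j j = (Ψ (single k k 1)).trace from rfl, htp,
      trace_single_eq_same, Complex.one_re]
  · intro d
    ext j
    simp only [mulVec, dotProduct, of_apply, ← sum_single_eq_diagonal, map_sum,
      Matrix.sum_apply, Complex.re_sum]
    refine Finset.sum_congr rfl fun k _ ↦ ?_
    have : single k k ((RCLike.ofReal ∘ d) k) = (d k : ℂ) • single k k (1 : ℂ) := by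
      rw [smul_single, smul_eq_mul, mul_one]; rfl
    rw [this, map_smul, Matrix.smul_apply, smul_eq_mul, Complex.re_ofReal_mul, mul_comm]

lemma exists_mem_doublyStochastic_eigenvalues_map
    (Φ : Matrix ι ι ℂ →ₗ[ℂ] Matrix ι ι ℂ) (hpos : ∀ A, A.PosSemidef → (Φ A).PosSemidef)
    (htp : ∀ A, (Φ A).trace = A.trace) (hunital : Φ 1 = 1)
    {A : Matrix ι ι ℂ} (hA : A.IsHermitian) (hΦA : (Φ A).IsHermitian) :
    ∃ M ∈ doublyStochastic ℝ ι, hΦA.eigenvalues = M *ᵥ hA.eigenvalues := by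
  let U := conjStarAlgAut ℂ (Matrix ι ι ℂ) hA.eigenvectorUnitary
  let V := conjStarAlgAut ℂ (Matrix ι ι ℂ) (star hΦA.eigenvectorUnitary)
  let Ψ := V.toAlgEquiv.toLinearMap ∘ₗ Φ ∘ₗ U.toAlgEquiv.toLinearMap
  obtain ⟨M, hM, hdiag⟩ := exists_mem_doublyStochastic_re_diag_map_diagonal Ψ
    (fun B hB ↦ ((hpos _ (hB.conjStarAlgAut _)).conjStarAlgAut _))
    (fun B ↦ by simp [Ψ, U, V, htp, -conjStarAlgAut_apply])
    (by simp [Ψ, U, V, hunital])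
  refine ⟨M, hM, ?_⟩
  have hΨ : Ψ (diagonal (RCLike.ofReal ∘ hA.eigenvalues))
      = diagonal (RCLike.ofReal ∘ hΦA.eigenvalues) := by
    change V (Φ (U _)) = _
    rw [← hA.spectral_theorem, hΦA.conjStarAlgAut_star_eigenvectorUnitary]
  rw [← hdiag, hΨ]
  ext j
  simp

end Spectral

section DensityMatrix

variable {n : ℕ} {q : ℝ} {ρ σ : Matrix (Fin n) (Fin n) ℂ}

lemma eigs_of_isHermitian (hρ : ρ.IsHermitian) : eigs ρ = hρ.eigenvalues :=
  dif_pos hρ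

lemma IsDensityMatrix.eigs_nonneg (hρ : IsDensityMatrix ρ) (k : Fin n) : 0 ≤ eigs ρ k := by
  rw [eigs_of_isHermitian hρ.1.1]
  exact hρ.1.eigenvalues_nonneg k

lemma IsDensityMatrix.sum_eigs (hρ : IsDensityMatrix ρ) : ∑ k, eigs ρ k = 1 := by
  have := hρ.2
  rw [hρ.1.1.trace_eq_sum_eigenvalues, ← eigs_of_isHermitian hρ.1.1] at this
  exact Complex.ofReal_injective (by push_cast; exact this)

lemma IsDensityMatrix.sum_eigs_rpow_pos (hρ : IsDensityMatrix ρ) (q : ℝ) :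
    0 < ∑ k, eigs ρ k ^ q := by
  obtain ⟨k, -, hk⟩ := Finset.exists_ne_zero_of_sum_ne_zero (hρ.sum_eigs ▸ one_ne_zero)
  exact Finset.sum_pos' (fun i _ ↦ Real.rpow_nonneg (hρ.eigs_nonneg i) q)
    ⟨k, Finset.mem_univ k, Real.rpow_pos_of_pos ((hρ.eigs_nonneg k).lt_of_ne' hk) q⟩

lemma IsDensityMatrix.map {Φ : Matrix (Fin n) (Fin n) ℂ →ₗ[ℂ] Matrix (Fin n) (Fin n) ℂ}
    (hρ : IsDensityMatrix ρ) (hpos : IsPositiveMap Φ) (htp : IsTracePreserving Φ) :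
    IsDensityMatrix (Φ ρ) :=
  ⟨hpos ρ hρ.1, (htp ρ).trans hρ.2⟩

lemma renyiEntropy_le_renyiEntropy_iff (hq : q ≠ 1) (hρ : IsDensityMatrix ρ)
    (hσ : IsDensityMatrix σ) :
    renyiEntropy q ρ ≤ renyiEntropy q σ ↔
      ∑ k, (q - 1) * eigs σ k ^ q ≤ ∑ k, (q - 1) * eigs ρ k ^ q := by
  rw [renyiEntropy, renyiEntropy,
    log_div_one_sub_le_iff hq (hρ.sum_eigs_rpow_pos q) (hσ.sum_eigs_rpow_pos q),
    Finset.mul_sum, Finset.mul_sum]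

theorem renyiEntropy_le_renyiEntropy_map (hq0 : 0 < q) (hq1 : q ≠ 1)
    {Φ : Matrix (Fin n) (Fin n) ℂ →ₗ[ℂ] Matrix (Fin n) (Fin n) ℂ}
    (hpos : IsPositiveMap Φ) (htp : IsTracePreserving Φ) (hunital : Φ 1 = 1)
    (hρ : IsDensityMatrix ρ) : renyiEntropy q ρ ≤ renyiEntropy q (Φ ρ) := by
  have hΦρ := hρ.map hpos htp
  obtain ⟨M, hM, heig⟩ :=
    exists_mem_doublyStochastic_eigenvalues_map Φ hpos htp hunital hρ.1.1 hΦρ.1.1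
  rw [renyiEntropy_le_renyiEntropy_iff hq1 hρ hΦρ, eigs_of_isHermitian hρ.1.1,
    eigs_of_isHermitian hΦρ.1.1, heig]
  exact (strictConvexOn_mul_rpow hq0 hq1).convexOn.sum_map_mulVec_le hM hρ.1.eigenvalues_nonneg

noncomputable def maximallyMixed (n : ℕ) : Matrix (Fin n) (Fin n) ℂ :=
  (((n : ℝ)⁻¹ : ℝ) : ℂ) • 1

lemma isDensityMatrix_maximallyMixed (hn : n ≠ 0) : IsDensityMatrix (maximallyMixed n) :=
  ⟨PosSemidef.one.smul (by simp), by simp [maximallyMixed, hn]⟩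

lemma natCast_smul_maximallyMixed (hn : n ≠ 0) : (n : ℂ) • maximallyMixed n = 1 := by
  simp [maximallyMixed, smul_smul, hn]

lemma eigs_maximallyMixed (hn : n ≠ 0) :
    eigs (maximallyMixed n) = Function.const (Fin n) (n : ℝ)⁻¹ := by
  have hH := (isDensityMatrix_maximallyMixed hn).1.1
  rw [eigs_of_isHermitian hH, hH.eigenvalues_eq_const_iff]
  rfl

lemma eq_maximallyMixed_of_renyiEntropy_le (hq0 : 0 < q) (hq1 : q ≠ 1) (hn : n ≠ 0)
    (hσ : IsDensityMatrix σ) (h : renyiEntropy q (maximallyMixed n) ≤ renyiEntropy q σ) :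
    σ = maximallyMixed n := by
  rw [renyiEntropy_le_renyiEntropy_iff hq1 (isDensityMatrix_maximallyMixed hn) hσ,
    eigs_maximallyMixed hn] at h
  have := (strictConvexOn_mul_rpow hq0 hq1).eq_const_inv_card_of_sum_le hσ.eigs_nonneg
    hσ.sum_eigs (by simpa using h)
  rwa [eigs_of_isHermitian hσ.1.1, Fintype.card_fin, hσ.1.1.eigenvalues_eq_const_iff] at this

end DensityMatrix

theorem unital_iff_renyiEntropy_nondecreasing_general {n : ℕ}
    {q : ℝ} (hq0 : 0 < q) (hq1 : q ≠ 1)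
    (Φ : Matrix (Fin n) (Fin n) ℂ →ₗ[ℂ] Matrix (Fin n) (Fin n) ℂ)
    (hpos : IsPositiveMap Φ) (htp : IsTracePreserving Φ) :
    Φ 1 = 1 ↔
      ∀ ρ : Matrix (Fin n) (Fin n) ℂ, IsDensityMatrix ρ →
        renyiEntropy q ρ ≤ renyiEntropy q (Φ ρ) := by
  refine ⟨fun hunital ρ hρ ↦ renyiEntropy_le_renyiEntropy_map hq0 hq1 hpos htp hunital hρ,
    fun h ↦ ?_⟩
  rcases eq_or_ne n 0 with rfl | hn
  · exact Subsingleton.elim _ _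
  have hmix := isDensityMatrix_maximallyMixed hn
  have hfix : Φ (maximallyMixed n) = maximallyMixed n :=
    eq_maximallyMixed_of_renyiEntropy_le hq0 hq1 hn (hmix.map hpos htp) (h _ hmix)
  rw [← natCast_smul_maximallyMixed hn, map_smul, hfix]

/-- A positive trace-preserving linear map `Φ` is unital iff it does not
decrease the Rényi entropy of parameter `q` (`0 < q ≠ 1`) on density matrices. -/
theorem unital_iff_renyiEntropy_nondecreasing {n : ℕ} (hn : 1 ≤ n)
    {q : ℝ} (hq0 : 0 < q) (hq1 : q ≠ 1)
    (Φ : Matrix (Fin n) (Fin n) ℂ →ₗ[ℂ] Matrix (Fin n) (Fin n) ℂ)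
    (hpos : IsPositiveMap Φ) (htp : IsTracePreserving Φ) :
    Φ 1 = 1 ↔
      ∀ ρ : Matrix (Fin n) (Fin n) ℂ, IsDensityMatrix ρ →
        renyiEntropy q ρ ≤ renyiEntropy q (Φ ρ) :=
  unital_iff_renyiEntropy_nondecreasing_general hq0 hq1 Φ hpos htp
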